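/- arXiv:2405.06532 — 2 statements merged into one kernel-verified Lean document; each statement's English description precedes it below -/
import Mathlib

section
/- Let H be a real Hilbert space and g a bounded linear functional on H. Suppose H admits a family of subspaces V_0 and V_{j,i} (finitely or countably many) together with norms such that every w ∈ H can be decomposed as w = w_0 + ∑_{j,i} w_{j,i} with w_0 ∈ V_0, w_{j,i} ∈ V_{j,i}, and the splitting is stable: c ||w||^2 ≤ inf over decompositions of (||w_0||^2 + ∑_{j,i} ||w_{j,i}||^2) ≤ C ||w||^2 for constants 0 < c ≤ C. If each V_{j,i} is one-dimensional, spanned by a nonzero vector φ_{j,i}, and g_0 denotes the Riesz representation of g restricted to V_0, then c (||g_0||^2 + ∑_{j,i} ⟨g, φ_{j,i}⟩^2 / ||φ_{j,i}||^2) ≤ ||g||_{H^#}^2 ≤ C (||g_0||^2 + ∑_{j,i} ⟨g, φ_{j,i}⟩^2 / ||φ_{j,i}||^2). -/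
/-!
Put `G = ‖g0‖² + ∑ g(φᵢ)²/‖φᵢ‖²`. For a splitting `w = w0 + ∑ aᵢ φᵢ` one has
`g w = ⟪g0, w0⟫ + ∑ (aᵢ‖φᵢ‖)(g(φᵢ)/‖φᵢ‖)`, so Cauchy–Schwarz gives
`(g w)² ≤ G (‖w0‖² + ∑ ‖aᵢφᵢ‖²)`; taking the infimum over splittings and using the upper
stability bound yields `‖g‖² ≤ C G`. Conversely the vector `w = g0 + ∑_{i∈F} (g(φᵢ)/‖φᵢ‖²) φᵢ`
has a splitting of energy `S = g w`, so `c‖w‖² ≤ S ≤ ‖g‖‖w‖`, whence `c S ≤ ‖g‖²`; letting the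
finite set `F` grow gives `c G ≤ ‖g‖²`.
-/

open scoped RealInnerProductSpace

theorem sq_add_le_add_mul_add {s r P Q A B : ℝ} (hP : 0 ≤ P) (hQ : 0 ≤ Q) (hA : 0 ≤ A)
    (hB : 0 ≤ B) (hs : s ^ 2 ≤ P * Q) (hr : r ^ 2 ≤ A * B) :
    (s + r) ^ 2 ≤ (P + A) * (Q + B) := by
  have hsr : 2 * (s * r) ≤ P * B + A * Q := by
    refine le_of_sq_le_sq ?_ (by positivity)
    calc (2 * (s * r)) ^ 2 = 4 * (s ^ 2 * r ^ 2) := by ring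
      _ ≤ 4 * ((P * Q) * (A * B)) := by gcongr
      _ ≤ (P * B + A * Q) ^ 2 := by nlinarith [sq_nonneg (P * B - A * Q)]
  nlinarith

theorem Summable.mul_of_summable_sq {ι : Type*} {x y : ι → ℝ} (hx : Summable fun i => x i ^ 2)
    (hy : Summable fun i => y i ^ 2) : Summable fun i => x i * y i :=
  Summable.of_norm_bounded ((hx.add hy).div_const 2) fun i => by
    rw [Real.norm_eq_abs, abs_mul]
    nlinarith [sq_abs (x i), sq_abs (y i), sq_nonneg (|x i| - |y i|)]

theorem sq_tsum_mul_le {ι : Type*} {x y : ι → ℝ} (hx : Summable fun i => x i ^ 2)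
    (hy : Summable fun i => y i ^ 2) :
    (∑' i, x i * y i) ^ 2 ≤ (∑' i, x i ^ 2) * ∑' i, y i ^ 2 := by
  refine le_of_tendsto' ((hx.mul_of_summable_sq hy).hasSum.pow 2) fun F => ?_
  calc (∑ i ∈ F, x i * y i) ^ 2 ≤ (∑ i ∈ F, x i ^ 2) * ∑ i ∈ F, y i ^ 2 :=
        Finset.sum_mul_sq_le_sq_mul_sq F x y
    _ ≤ (∑' i, x i ^ 2) * ∑' i, y i ^ 2 :=
        mul_le_mul (hx.sum_le_tsum F fun i _ => sq_nonneg _)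
          (hy.sum_le_tsum F fun i _ => sq_nonneg _) (F.sum_nonneg fun i _ => sq_nonneg _)
          (tsum_nonneg fun i => sq_nonneg _)

theorem Real.le_mul_sInf {s : Set ℝ} {b k : ℝ} (hk : 0 ≤ k) (hs : s.Nonempty)
    (h : ∀ S ∈ s, b ≤ k * S) : b ≤ k * sInf s := by
  rw [← smul_eq_mul, ← Real.sInf_smul_of_nonneg hk]
  exact le_csInf hs.smul_set (Set.forall_mem_image.2 h)

theorem ContinuousLinearMap.opNorm_sq_le_of_sq_le {E : Type*} [SeminormedAddCommGroup E]
    [NormedSpace ℝ E] (g : E →L[ℝ] ℝ) {K : ℝ} (hK : 0 ≤ K) (h : ∀ x, g x ^ 2 ≤ K * ‖x‖ ^ 2) :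
    ‖g‖ ^ 2 ≤ K := by
  refine (Real.le_sqrt (norm_nonneg g) hK).1 (g.opNorm_le_bound (Real.sqrt_nonneg K) fun x => ?_)
  rw [← Real.sqrt_sq (norm_nonneg (g x)), ← Real.sqrt_sq (norm_nonneg x), ← Real.sqrt_mul hK,
    Real.norm_eq_abs, sq_abs]
  exact Real.sqrt_le_sqrt (h x)

theorem mul_le_sq_of_mul_sq_le_of_le_mul {c S x n : ℝ} (hc : 0 ≤ c) (hn : 0 ≤ n) (hx : 0 ≤ x)
    (hlow : c * x ^ 2 ≤ S) (hup : S ≤ n * x) : c * S ≤ n ^ 2 := by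
  rcases hx.eq_or_lt with rfl | hx
  · nlinarith
  have hcx : c * x ≤ n := le_of_mul_le_mul_right (by nlinarith) hx
  nlinarith [mul_le_mul_of_nonneg_left hup hc, mul_le_mul_of_nonneg_left hcx hn]

section

variable {H : Type*} [NormedAddCommGroup H] [InnerProductSpace ℝ H] {ι : Type*}

def splittingEnergies (V0 : Submodule ℝ H) (φ : ι → H) (w : H) : Set ℝ :=
  {S : ℝ | ∃ (w0 : H) (a : ι → ℝ),
      w0 ∈ V0 ∧ HasSum (fun i => a i • φ i) (w - w0) ∧
      Summable (fun i => ‖a i • φ i‖ ^ 2) ∧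
      S = ‖w0‖ ^ 2 + ∑' i, ‖a i • φ i‖ ^ 2}

variable {V0 : Submodule ℝ H} {φ : ι → H}

theorem nonneg_of_mem_splittingEnergies {w : H} {S : ℝ} (hS : S ∈ splittingEnergies V0 φ w) :
    0 ≤ S := by
  obtain ⟨w0, a, -, -, -, rfl⟩ := hS
  exact add_nonneg (sq_nonneg _) (tsum_nonneg fun i => sq_nonneg _)

theorem bddBelow_splittingEnergies (w : H) : BddBelow (splittingEnergies V0 φ w) :=
  ⟨0, fun _ => nonneg_of_mem_splittingEnergies⟩

theorem add_sum_mem_splittingEnergies {w0 : H} (hw0 : w0 ∈ V0) (F : Finset ι) (a : ι → ℝ) :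
    ‖w0‖ ^ 2 + ∑ i ∈ F, ‖a i • φ i‖ ^ 2 ∈ splittingEnergies V0 φ (w0 + ∑ i ∈ F, a i • φ i) := by
  classical
  set b : ι → ℝ := fun i => if i ∈ F then a i else 0
  have hb : ∀ i ∉ F, b i • φ i = 0 := fun i hi => by simp [b, hi]
  have hbF : ∀ i ∈ F, b i • φ i = a i • φ i := fun i hi => by simp [b, hi]
  have hb2 : ∀ i ∉ F, ‖b i • φ i‖ ^ 2 = 0 := fun i hi => by simp [hb i hi]
  refine ⟨w0, b, hw0, ?_, summable_of_ne_finset_zero hb2, ?_⟩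
  · rw [add_sub_cancel_left, ← F.sum_congr rfl hbF]
    exact hasSum_sum_of_ne_finset_zero hb
  · rw [tsum_eq_sum hb2]
    exact congrArg _ (F.sum_congr rfl fun i hi => by rw [hbF i hi])

variable (g : H →L[ℝ] ℝ) {g0 : H}

theorem norm_mul_apply_div_norm (v : H) : ‖v‖ * (g v / ‖v‖) = g v := by
  rcases eq_or_ne v 0 with rfl | hv
  · simp
  · field_simp

theorem apply_div_norm_sq_smul (v : H) : g ((g v / ‖v‖ ^ 2) • v) = g v ^ 2 / ‖v‖ ^ 2 := by
  rw [map_smul, smul_eq_mul]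
  ring

theorem norm_div_norm_sq_smul_sq (v : H) : ‖(g v / ‖v‖ ^ 2) • v‖ ^ 2 = g v ^ 2 / ‖v‖ ^ 2 := by
  rcases eq_or_ne v 0 with rfl | hv
  · simp
  · rw [norm_smul, Real.norm_eq_abs, mul_pow, sq_abs]
    field_simp

theorem mul_norm_sq_add_sum_le_opNorm_sq {c : ℝ} (hc : 0 ≤ c)
    (hstab : ∀ w, c * ‖w‖ ^ 2 ≤ sInf (splittingEnergies V0 φ w)) (hg0 : g0 ∈ V0)
    (hg0riesz : ∀ v ∈ V0, g v = ⟪g0, v⟫) (F : Finset ι) :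
    c * (‖g0‖ ^ 2 + ∑ i ∈ F, g (φ i) ^ 2 / ‖φ i‖ ^ 2) ≤ ‖g‖ ^ 2 := by
  set w := g0 + ∑ i ∈ F, (g (φ i) / ‖φ i‖ ^ 2) • φ i
  have hS := add_sum_mem_splittingEnergies (φ := φ) hg0 F fun i => g (φ i) / ‖φ i‖ ^ 2
  simp only [norm_div_norm_sq_smul_sq] at hS
  have hgw : g w = ‖g0‖ ^ 2 + ∑ i ∈ F, g (φ i) ^ 2 / ‖φ i‖ ^ 2 := by
    simp only [w, map_add, map_sum, apply_div_norm_sq_smul, hg0riesz g0 hg0,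
      real_inner_self_eq_norm_sq]
  refine mul_le_sq_of_mul_sq_le_of_le_mul hc (norm_nonneg g) (norm_nonneg w)
    ((hstab w).trans (csInf_le (bddBelow_splittingEnergies w) hS)) ?_
  rw [← hgw]
  exact (le_abs_self _).trans (g.le_opNorm w)

theorem sq_apply_le_mul_of_mem_splittingEnergies (hg0riesz : ∀ v ∈ V0, g v = ⟪g0, v⟫)
    (ht : Summable fun i => g (φ i) ^ 2 / ‖φ i‖ ^ 2) {w : H} {S : ℝ}
    (hS : S ∈ splittingEnergies V0 φ w) :
    g w ^ 2 ≤ (‖g0‖ ^ 2 + ∑' i, g (φ i) ^ 2 / ‖φ i‖ ^ 2) * S := by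
  obtain ⟨w0, a, hw0, hsum, hsq, rfl⟩ := hS
  set x : ι → ℝ := fun i => g (φ i) / ‖φ i‖
  set y : ι → ℝ := fun i => a i * ‖φ i‖
  have hx : ∀ i, x i ^ 2 = g (φ i) ^ 2 / ‖φ i‖ ^ 2 := fun i => div_pow _ _ 2
  have hy : ∀ i, y i ^ 2 = ‖a i • φ i‖ ^ 2 := fun i => by
    simp only [y, norm_smul, Real.norm_eq_abs, mul_pow, sq_abs]
  have hxy : ∀ i, x i * y i = g (a i • φ i) := fun i => by
    rw [map_smul, smul_eq_mul, ← norm_mul_apply_div_norm g (φ i)]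
    ring
  have hgw : g w = ⟪g0, w0⟫ + ∑' i, x i * y i := by
    rw [← hg0riesz w0 hw0, funext hxy, (hsum.mapL g).tsum_eq, ← map_add, add_sub_cancel]
  simp only [← hx, ← hy] at ht hsq ⊢
  rw [hgw]
  refine sq_add_le_add_mul_add (sq_nonneg _) (sq_nonneg _) (tsum_nonneg fun i => sq_nonneg _)
    (tsum_nonneg fun i => sq_nonneg _) ?_ (sq_tsum_mul_le ht hsq)
  rw [← mul_pow]
  exact sq_le_sq' (abs_le.1 (abs_real_inner_le_norm g0 w0)).1 (real_inner_le_norm g0 w0)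

end

theorem stmt4_general {H : Type*} [NormedAddCommGroup H] [InnerProductSpace ℝ H]
    {ι : Type*}
    (V0 : Submodule ℝ H) (φ : ι → H)
    (c C : ℝ) (hc : 0 < c) (hcC : c ≤ C)
    (D : H → Set ℝ)
    (hD : ∀ w, D w = {S : ℝ | ∃ (w0 : H) (a : ι → ℝ),
      w0 ∈ V0 ∧ HasSum (fun i => a i • φ i) (w - w0) ∧
      Summable (fun i => ‖a i • φ i‖ ^ 2) ∧
      S = ‖w0‖ ^ 2 + ∑' i, ‖a i • φ i‖ ^ 2})
    (hnonempty : ∀ w, (D w).Nonempty)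
    (hstab : ∀ w, c * ‖w‖ ^ 2 ≤ sInf (D w) ∧ sInf (D w) ≤ C * ‖w‖ ^ 2)
    (g : H →L[ℝ] ℝ) (g0 : H) (hg0 : g0 ∈ V0)
    (hg0riesz : ∀ v ∈ V0, g v = ⟪g0, v⟫) :
    c * (‖g0‖ ^ 2 + ∑' i, (g (φ i)) ^ 2 / ‖φ i‖ ^ 2) ≤ ‖g‖ ^ 2 ∧
    ‖g‖ ^ 2 ≤ C * (‖g0‖ ^ 2 + ∑' i, (g (φ i)) ^ 2 / ‖φ i‖ ^ 2) := by
  obtain rfl : D = splittingEnergies V0 φ := funext hD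
  have hpartial := mul_norm_sq_add_sum_le_opNorm_sq g hc.le (fun w => (hstab w).1) hg0 hg0riesz
  have ht : Summable fun i => g (φ i) ^ 2 / ‖φ i‖ ^ 2 :=
    summable_of_sum_le (c := ‖g‖ ^ 2 / c - ‖g0‖ ^ 2) (fun i => by positivity) fun F => by
      have := hpartial F
      rw [le_sub_iff_add_le, le_div_iff₀ hc]
      linarith
  set G := ‖g0‖ ^ 2 + ∑' i, g (φ i) ^ 2 / ‖φ i‖ ^ 2
  have hG : 0 ≤ G := add_nonneg (sq_nonneg _) (tsum_nonneg fun i => by positivity)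
  refine ⟨le_of_tendsto' ((ht.hasSum.const_add _).const_mul c) hpartial,
    g.opNorm_sq_le_of_sq_le (by nlinarith) fun w => ?_⟩
  calc g w ^ 2 ≤ G * sInf (splittingEnergies V0 φ w) :=
        Real.le_mul_sInf hG (hnonempty w) fun S hS =>
          sq_apply_le_mul_of_mem_splittingEnergies g hg0riesz ht hS
    _ ≤ G * (C * ‖w‖ ^ 2) := mul_le_mul_of_nonneg_left (hstab w).2 hG
    _ = C * G * ‖w‖ ^ 2 := by ring

/-- Abstract frame property: a stable splitting of a Hilbert space into a subspace `V0`
and one-dimensional spaces spanned by vectors `φ i` yields two-sided frame bounds for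
the dual norm of any bounded linear functional. -/
theorem stmt4 {H : Type*} [NormedAddCommGroup H] [InnerProductSpace ℝ H] [CompleteSpace H]
    {ι : Type*} [Countable ι]
    (V0 : Submodule ℝ H) (φ : ι → H) (hφ : ∀ i, φ i ≠ 0)
    (c C : ℝ) (hc : 0 < c) (hcC : c ≤ C)
    (D : H → Set ℝ)
    (hD : ∀ w, D w = {S : ℝ | ∃ (w0 : H) (a : ι → ℝ),
      w0 ∈ V0 ∧ HasSum (fun i => a i • φ i) (w - w0) ∧
      Summable (fun i => ‖a i • φ i‖ ^ 2) ∧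
      S = ‖w0‖ ^ 2 + ∑' i, ‖a i • φ i‖ ^ 2})
    (hnonempty : ∀ w, (D w).Nonempty)
    (hstab : ∀ w, c * ‖w‖ ^ 2 ≤ sInf (D w) ∧ sInf (D w) ≤ C * ‖w‖ ^ 2)
    (g : H →L[ℝ] ℝ) (g0 : H) (hg0 : g0 ∈ V0)
    (hg0riesz : ∀ v ∈ V0, g v = ⟪g0, v⟫) :
    c * (‖g0‖ ^ 2 + ∑' i, (g (φ i)) ^ 2 / ‖φ i‖ ^ 2) ≤ ‖g‖ ^ 2 ∧
    ‖g‖ ^ 2 ≤ C * (‖g0‖ ^ 2 + ∑' i, (g (φ i)) ^ 2 / ‖φ i‖ ^ 2) :=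
  stmt4_general V0 φ c C hc hcC D hD hnonempty hstab g g0 hg0 hg0riesz
end

section
/- Let V be a finite-dimensional real inner product space with inner product a(·,·), r ∈ V^# a linear functional, and V_0,...,V_J subspaces with V = V_J (the decomposition need not be direct). Define r_j ∈ V_j by the Riesz representations ⟨r, w_j⟩ = b_j(r_j, w_j) for all w_j ∈ V_j, where b_j are inner products on V_j, with b_0 = a restricted to V_0. Suppose the splitting is stable: for every w ∈ V, c_S a(w,w) ≤ inf_{w = ∑ w_j, w_j∈V_j} ∑_j b_j(w_j, w_j). Then ∑_{j=0}^J b_j(r_j, r_j) ≤ c_S^{-1} ||r||_{V^#,a}^2, where ||r||_{V^#,a} is the dual norm of r with respect to the a-norm. -/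
open scoped RealInnerProductSpace

/- With `s = ∑ j, r_j` the Riesz equations give `∑ j, b_j(r_j, r_j) = r s`, and stability gives
`c_S ‖s‖² ≤ r s ≤ ‖r‖ ‖s‖`; Young's inequality `‖r‖ ‖s‖ ≤ (c_S ‖s‖² + c_S⁻¹ ‖r‖²) / 2` then
absorbs `‖s‖` into the left-hand side. -/

theorem le_inv_mul_sq_of_le_mul_of_mul_sq_le {S a x c : ℝ} (hc : 0 < c) (hSax : S ≤ a * x)
    (hxS : c * x ^ 2 ≤ S) : S ≤ c⁻¹ * a ^ 2 := by
  have young : 2 * c * (a * x) ≤ c ^ 2 * x ^ 2 + a ^ 2 := by nlinarith [sq_nonneg (c * x - a)]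
  have hcS : c * S ≤ a ^ 2 := by nlinarith
  rwa [← le_div_iff₀' hc, div_eq_inv_mul] at hcS

theorem ContinuousLinearMap.apply_le_inv_mul_opNorm_sq {E : Type*} [SeminormedAddCommGroup E]
    [NormedSpace ℝ E] (r : E →L[ℝ] ℝ) {s : E} {c : ℝ} (hc : 0 < c) (hs : c * ‖s‖ ^ 2 ≤ r s) :
    r s ≤ c⁻¹ * ‖r‖ ^ 2 :=
  le_inv_mul_sq_of_le_mul_of_mul_sq_le hc ((le_abs_self _).trans (r.le_opNorm s)) hs

theorem sum_riesz_self_eq_apply_sum {V ι : Type*} [AddCommGroup V] [Module ℝ V] (s : Finset ι)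
    (W : ι → Submodule ℝ V) (b : ι → V → V → ℝ) (r : V →ₗ[ℝ] ℝ) (rj : ι → V)
    (hrj : ∀ j, rj j ∈ W j) (hriesz : ∀ j, ∀ w ∈ W j, r w = b j (rj j) w) :
    ∑ j ∈ s, b j (rj j) (rj j) = r (∑ j ∈ s, rj j) := by
  rw [map_sum]
  exact Finset.sum_congr rfl fun j _ => (hriesz j (rj j) (hrj j)).symm

theorem stmt8_general {V : Type*} [NormedAddCommGroup V] [InnerProductSpace ℝ V]
    (J : ℕ) (W : Fin (J + 1) → Submodule ℝ V)
    (b : Fin (J + 1) → V → V → ℝ)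
    (r : V →L[ℝ] ℝ) (rj : Fin (J + 1) → V) (hrj : ∀ j, rj j ∈ W j)
    (hriesz : ∀ j, ∀ w ∈ W j, r w = b j (rj j) w)
    (cS : ℝ) (hcS : 0 < cS)
    (hstab : ∀ (w : V) (wj : Fin (J + 1) → V),
      (∀ j, wj j ∈ W j) → w = ∑ j, wj j →
      cS * ‖w‖ ^ 2 ≤ ∑ j, b j (wj j) (wj j)) :
    ∑ j, b j (rj j) (rj j) ≤ cS⁻¹ * ‖r‖ ^ 2 := by
  have hsum := sum_riesz_self_eq_apply_sum Finset.univ W b (r : V →ₗ[ℝ] ℝ) rj hrj hriesz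
  have hstable := hstab _ rj hrj rfl
  rw [hsum] at hstable ⊢
  exact r.apply_le_inv_mul_opNorm_sq hcS hstable

/-- Abstract efficiency of the multilevel residual estimator: under the lower stability
bound of the splitting, the sum of the Riesz-represented residual norms is bounded by
`c_S⁻¹` times the squared dual norm of the residual. -/
theorem stmt8 {V : Type*} [NormedAddCommGroup V] [InnerProductSpace ℝ V]
    [FiniteDimensional ℝ V]
    (J : ℕ) (W : Fin (J + 1) → Submodule ℝ V) (hWJ : W (Fin.last J) = ⊤)
    (b : Fin (J + 1) → V → V → ℝ)
    (hsymm : ∀ j, ∀ u v, u ∈ W j → v ∈ W j → b j u v = b j v u)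
    (hpos : ∀ j, ∀ u, u ∈ W j → 0 ≤ b j u u)
    (hdef : ∀ j, ∀ u, u ∈ W j → b j u u = 0 → u = 0)
    (hb0 : ∀ u v, u ∈ W 0 → v ∈ W 0 → b 0 u v = ⟪u, v⟫)
    (r : V →L[ℝ] ℝ) (rj : Fin (J + 1) → V) (hrj : ∀ j, rj j ∈ W j)
    (hriesz : ∀ j, ∀ w ∈ W j, r w = b j (rj j) w)
    (cS : ℝ) (hcS : 0 < cS)
    (hstab : ∀ (w : V) (wj : Fin (J + 1) → V),
      (∀ j, wj j ∈ W j) → w = ∑ j, wj j →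
      cS * ‖w‖ ^ 2 ≤ ∑ j, b j (wj j) (wj j)) :
    ∑ j, b j (rj j) (rj j) ≤ cS⁻¹ * ‖r‖ ^ 2 :=
  stmt8_general J W b r rj hrj hriesz cS hcS hstab
end
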